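/- Let C be a β-avoiding simplicial complex with no ghost vertices whose 1-skeleton is the disjoint union of two complete graphs on nonempty vertex sets M and N (that is, the 2-element faces of C are exactly the pairs of distinct vertices lying both in M or both in N). Then C is the disjoint union of the full simplex on M and the full simplex on N, i.e. the faces of C are exactly the subsets of M together with the subsets of N. -/

import Mathlib

/-!
A face meeting both `M` and `N` would contain an edge from `M` to `N`, so every face lies in
`M` or in `N`. Conversely, if some subset of `M` were not a face, take a minimal nonface
`T ⊆ M`. Since all pairs in `M` are edges, `T` has at least three vertices; any vertex `w ∈ N`
is joined to no vertex of `T`, so `C` restricted to `T ∪ {w}` is `∂Δ_k ⊔ {w}` with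
`k = |T| - 1 ≥ 2`, a forbidden minor. The same argument applies to `N`.
-/

open Finset

/-- A (finite) simplicial complex on ground set `V`: a collection of finite subsets of `V`
closed under taking subsets.  (The empty collection, the void complex, is allowed.) -/
structure SComplex (V : Type) where
  faces : Finset (Finset V)
  down_closed : ∀ s ∈ faces, ∀ t ⊆ s, t ∈ faces

/-- An integer matrix, viewed over `ℚ`, has a rank. -/
noncomputable def intRank {m n : Type} [Fintype n] (A : Matrix m n ℤ) : ℕ :=
  (A.map ((↑·) : ℤ → ℚ)).rank

/-- An integer matrix `A` of rank `d` is unimodular if there is a nonzero `λ` such that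
every `d × d` minor of `A` equals `0`, `λ` or `-λ`. -/
def IntUnimodular {m n : Type} [Fintype m] [Fintype n] (A : Matrix m n ℤ) : Prop :=
  ∃ lam : ℤ, lam ≠ 0 ∧ ∀ (r : Fin (intRank A) → m) (c : Fin (intRank A) → n),
    (A.submatrix r c).det = 0 ∨ (A.submatrix r c).det = lam ∨ (A.submatrix r c).det = -lam

/-- A real matrix `A` of rank `d` is unimodular if there is a nonzero `λ` such that
every `d × d` minor of `A` equals `0`, `λ` or `-λ`. -/
def RealUnimodular {m n : Type} [Fintype m] [Fintype n] (A : Matrix m n ℝ) : Prop :=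
  ∃ lam : ℝ, lam ≠ 0 ∧ ∀ (r : Fin A.rank → m) (c : Fin A.rank → n),
    (A.submatrix r c).det = 0 ∨ (A.submatrix r c).det = lam ∨ (A.submatrix r c).det = -lam

namespace SComplex

variable {V W : Type}

/-- The facets of a simplicial complex: its inclusion-maximal faces. -/
def facets [DecidableEq V] (C : SComplex V) : Finset (Finset V) :=
  C.faces.filter fun F => ∀ G ∈ C.faces, F ⊆ G → F = G

/-- The design matrix `A_{C,d}` of the hierarchical model given by the complex `C` and
the table dimension vector `d`.  Columns are indexed by tuples `i ∈ ∏ v, [d v]`, rows by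
pairs `(F, j)` with `F` a facet and `j ∈ ∏_{v ∈ F} [d v]`; the entry is `1` iff the
restriction of `i` to `F` is `j`. -/
def designMatrixD [DecidableEq V] (C : SComplex V) (d : V → ℕ) :
    Matrix ((F : {F // F ∈ C.facets}) × ((v : {v // v ∈ F.1}) → Fin (d v.1)))
      ((v : V) → Fin (d v)) ℤ :=
  fun r i => if ∀ v : {v // v ∈ r.1.1}, i v.1 = r.2 v then 1 else 0

/-- The binary design matrix `A_C = A_{C,2}`. -/
def designMatrix [DecidableEq V] (C : SComplex V) := designMatrixD C fun _ => 2

/-- A simplicial complex is unimodular if its binary design matrix is unimodular. -/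
def IsUnimodular [DecidableEq V] [Fintype V] (C : SComplex V) : Prop :=
  IntUnimodular (designMatrix C)

/-- The Alexander dual `C* = {S : Sᶜ ∉ C}`. -/
def dual [DecidableEq V] [Fintype V] (C : SComplex V) : SComplex V where
  faces := univ.filter fun s => sᶜ ∉ C.faces
  down_closed := by
    intro s hs t ht
    simp only [mem_filter, mem_univ, true_and] at hs ⊢
    intro h
    exact hs (C.down_closed _ h _ (compl_subset_compl.mpr ht))

/-- The induced subcomplex of `C` on a vertex subset `A`. -/
def induce [DecidableEq V] (C : SComplex V) (A : Finset V) :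
    SComplex {v // v ∈ A} where
  faces := univ.filter fun s => s.map (Function.Embedding.subtype fun v => v ∈ A) ∈ C.faces
  down_closed := by
    intro s hs t ht
    simp only [mem_filter, mem_univ, true_and] at hs ⊢
    exact C.down_closed _ hs _ (map_subset_map.mpr ht)

/-- The link of a set `S` in `C`, as a complex on the ground set `Sᶜ`:
`link_S(C) = {F \ S : F ∈ C, S ⊆ F}`. -/
def link [DecidableEq V] [Fintype V] (C : SComplex V) (S : Finset V) :
    SComplex {v // v ∈ Sᶜ} where
  faces := univ.filter fun s =>
    s.map (Function.Embedding.subtype fun v => v ∈ Sᶜ) ∪ S ∈ C.faces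
  down_closed := by
    intro s hs t ht
    simp only [mem_filter, mem_univ, true_and] at hs ⊢
    exact C.down_closed _ hs _ (union_subset_union_left (map_subset_map.mpr ht))

/-- The minor `link_R(C \ S)` of `C`, a complex on the ground set `(R ∪ S)ᶜ`. -/
def minorAt [DecidableEq V] [Fintype V] (C : SComplex V) (R S : Finset V) :
    SComplex {v // v ∈ (R ∪ S)ᶜ} where
  faces := univ.filter fun s =>
    s.map (Function.Embedding.subtype fun v => v ∈ (R ∪ S)ᶜ) ∪ R ∈ C.faces
  down_closed := by
    intro s hs t ht
    simp only [mem_filter, mem_univ, true_and] at hs ⊢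
    exact C.down_closed _ hs _ (union_subset_union_left (map_subset_map.mpr ht))

/-- Isomorphism of simplicial complexes: a bijection of ground sets carrying faces to faces. -/
def Isomorphic [DecidableEq W] (C : SComplex V) (D : SComplex W) : Prop :=
  ∃ e : V ≃ W, ∀ s : Finset V, s ∈ C.faces ↔ s.image (⇑e) ∈ D.faces

/-- `D` is a minor of `C` if `D` is isomorphic to `link_R(C \ S)` for some face `R` of `C`
and vertex set `S` disjoint from `R`. -/
def IsMinor [DecidableEq V] [Fintype V] [DecidableEq W] (D : SComplex W) (C : SComplex V) :
    Prop :=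
  ∃ R S : Finset V, Disjoint R S ∧ R ∈ C.faces ∧ D.Isomorphic (C.minorAt R S)

/-- The simplicial complex generated by a given collection of sets. -/
def gen [DecidableEq V] [Fintype V] (gens : Finset (Finset V)) : SComplex V where
  faces := univ.filter fun s => ∃ g ∈ gens, s ⊆ g
  down_closed := by
    intro s hs t ht
    simp only [mem_filter, mem_univ, true_and] at hs ⊢
    obtain ⟨g, hg, hsg⟩ := hs
    exact ⟨g, hg, ht.trans hsg⟩

/-- The cone over `C`: one new vertex (the last one) is added to every face. -/
def cone {n : ℕ} (C : SComplex (Fin n)) : SComplex (Fin (n + 1)) where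
  faces := univ.filter fun s => (univ.filter fun v : Fin n => v.castSucc ∈ s) ∈ C.faces
  down_closed := by
    intro s hs t ht
    simp only [mem_filter, mem_univ, true_and] at hs ⊢
    refine C.down_closed _ hs _ ?_
    intro v hv
    simp only [mem_filter, mem_univ, true_and] at hv ⊢
    exact ht hv

/-- Adding one ghost vertex (the last one) to `C`. -/
def ghost {n : ℕ} (C : SComplex (Fin n)) : SComplex (Fin (n + 1)) where
  faces := univ.filter fun s => Fin.last n ∉ s ∧
    (univ.filter fun v : Fin n => v.castSucc ∈ s) ∈ C.faces
  down_closed := by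
    intro s hs t ht
    simp only [mem_filter, mem_univ, true_and] at hs ⊢
    refine ⟨fun h => hs.1 (ht h), C.down_closed _ hs.2 _ ?_⟩
    intro v hv
    simp only [mem_filter, mem_univ, true_and] at hv ⊢
    exact ht hv

/-- The iterated cone `cone^p(C)`. -/
def conePow {n : ℕ} : (p : ℕ) → SComplex (Fin n) → SComplex (Fin (n + p))
  | 0, C => C
  | p + 1, C => cone (conePow p C)

/-- Adding `p` ghost vertices `G^p(C)`. -/
def ghostPow {n : ℕ} : (p : ℕ) → SComplex (Fin n) → SComplex (Fin (n + p))
  | 0, C => C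
  | p + 1, C => ghost (ghostPow p C)

/-- The embedding `Fin n ↪ Fin (n+1)` by `castSucc`. -/
def castSuccEmb' {n : ℕ} : Fin n ↪ Fin (n + 1) :=
  ⟨Fin.castSucc, Fin.castSucc_injective n⟩

/-- The Lawrence lifting `Λ(C)`: its facets are the old ground set `[n]` (a big facet)
together with `F ∪ {n+1}` for each facet `F` of `C`. -/
def lawrence {n : ℕ} (C : SComplex (Fin n)) : SComplex (Fin (n + 1)) :=
  gen (insert ((univ : Finset (Fin n)).map castSuccEmb')
    (C.facets.image fun F => insert (Fin.last n) (F.map castSuccEmb')))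

/-- The disjoint union `Δ_m ⊔ Δ_k` of an `m`-simplex (on the first `m+1` vertices) and
a `k`-simplex (on the remaining `k+1` vertices). -/
def disjSimplices (m k : ℕ) : SComplex (Fin (m + k + 2)) :=
  gen {univ.filter fun x : Fin (m + k + 2) => (x : ℕ) ≤ m,
    univ.filter fun x : Fin (m + k + 2) => m < (x : ℕ)}

/-- The full simplex on `k` vertices (i.e. `Δ_{k-1}`; for `k = 0` this is `Δ_{-1} = {∅}`). -/
def fullSimplexC (k : ℕ) : SComplex (Fin k) where
  faces := univ
  down_closed := fun _ _ t _ => mem_univ t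

/-- The void complex `Δ_{-2} = {}`. -/
def voidC : SComplex (Fin 0) where
  faces := ∅
  down_closed := by simp

/-- `∂Δ_k ⊔ {v}`: the boundary of a `k`-simplex together with one extra disjoint vertex. -/
def bdyDisjPt (k : ℕ) : SComplex (Fin (k + 2)) where
  faces := univ.filter fun s =>
    s ⊂ (univ.filter fun x : Fin (k + 2) => (x : ℕ) < k + 1) ∨ s = {Fin.last (k + 1)}
  down_closed := by
    intro s hs t ht
    simp only [mem_filter, mem_univ, true_and] at hs ⊢
    rcases hs with hs | rfl
    · exact Or.inl (lt_of_le_of_lt ht hs)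
    · rcases Finset.subset_singleton_iff.mp ht with rfl | rfl
      · refine Or.inl (Finset.empty_ssubset.mpr ⟨⟨0, by omega⟩, ?_⟩)
        simp
      · exact Or.inr rfl

/-- The path `P_4` on four vertices. -/
def P4 : SComplex (Fin 4) := gen {{0, 1}, {1, 2}, {2, 3}}

/-- The four-cycle `C_4`. -/
def C4 : SComplex (Fin 4) := gen {{0, 1}, {1, 2}, {2, 3}, {0, 3}}

/-- The boundary of the octahedron, with antipodal vertex pairs `(0,3)`, `(1,4)`, `(2,5)`. -/
def O6 : SComplex (Fin 6) :=
  gen {{0, 1, 2}, {0, 1, 5}, {0, 4, 2}, {0, 4, 5}, {3, 1, 2}, {3, 1, 5}, {3, 4, 2}, {3, 4, 5}}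

/-- The complex `J_1` on five vertices with facets `12, 15, 234, 345`. -/
def J1 : SComplex (Fin 5) := gen {{0, 1}, {0, 4}, {1, 2, 3}, {2, 3, 4}}

/-- The complex `J_2` on five vertices with facets `12, 235, 34, 145`. -/
def J2 : SComplex (Fin 5) := gen {{0, 1}, {1, 2, 4}, {2, 3}, {0, 3, 4}}

/-- The nuclear complexes (on `Fin` ground sets), built from disjoint unions of two
simplices, duals thereof, and simplices, by repeatedly coning, adding ghost vertices
and taking Lawrence liftings. -/
inductive Nuclear : {n : ℕ} → SComplex (Fin n) → Prop
  | lawrence {n : ℕ} {D : SComplex (Fin n)} : Nuclear D → Nuclear D.lawrence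
  | ghost {n : ℕ} {D : SComplex (Fin n)} : Nuclear D → Nuclear D.ghost
  | coneDisj (p m k : ℕ) : Nuclear (conePow p (disjSimplices m k))
  | coneDualDisj (p m k : ℕ) : Nuclear (conePow p (dual (disjSimplices (m + 1) (k + 1))))
  | simplex (k : ℕ) : Nuclear (fullSimplexC k)
  | void : Nuclear voidC

/-- A complex on an arbitrary ground set is nuclear if it is isomorphic to a nuclear
complex on a `Fin` ground set. -/
def IsNuclear (C : SComplex V) : Prop :=
  ∃ (k : ℕ) (D : SComplex (Fin k)), Nuclear D ∧ C.Isomorphic D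

/-- `C` is β-avoiding if no minor of `C` is isomorphic to `P_4`, `O_6`, `O_6*`, `J_1`,
`J_1*`, `J_2`, or `∂Δ_k ⊔ {v}` for some `k ≥ 1`. -/
def BetaAvoiding [DecidableEq V] [Fintype V] (C : SComplex V) : Prop :=
  ¬ IsMinor P4 C ∧ ¬ IsMinor O6 C ∧ ¬ IsMinor (dual O6) C ∧
  ¬ IsMinor J1 C ∧ ¬ IsMinor (dual J1) C ∧ ¬ IsMinor J2 C ∧
  ∀ k : ℕ, 1 ≤ k → ¬ IsMinor (bdyDisjPt k) C

/-- The 1-skeleton of a complex, as a simple graph. -/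
def oneSkeleton [DecidableEq V] (C : SComplex V) : SimpleGraph V where
  Adj u v := u ≠ v ∧ ({u, v} : Finset V) ∈ C.faces
  symm := by
    refine ⟨?_⟩
    intro u v h
    exact ⟨h.1.symm, by rw [Finset.pair_comm]; exact h.2⟩
  loopless := by
    refine ⟨?_⟩
    intro u h
    exact h.1 rfl

/-- The non-ghost vertices of `C`: those `v` with `{v}` a face. -/
def nonGhost [DecidableEq V] [Fintype V] (C : SComplex V) : Finset V :=
  univ.filter fun v => ({v} : Finset V) ∈ C.faces

/-- `S` is a minimal nonface of `C`: not a face, but all proper subsets are faces. -/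
def MinNonface (C : SComplex V) (S : Finset V) : Prop :=
  S ∉ C.faces ∧ ∀ t ⊂ S, t ∈ C.faces

end SComplex

theorem Finset.exists_embedding_fin_succ_of_card_eq {V : Type} {T : Finset V} {n : ℕ}
    (hT : T.card = n) {w : V} (hw : w ∉ T) :
    ∃ f : Fin (n + 1) ↪ V, (Iio (Fin.last n)).map f = T ∧ f (Fin.last n) = w := by
  let g : Fin n ≃ T := (T.equivFin.trans (finCongr hT)).symm
  have hg : Function.Injective fun i => (g i : V) := Subtype.val_injective.comp g.injective
  refine ⟨⟨Fin.snoc (fun i => (g i : V)) w, Fin.snoc_injective_of_injective hg ?_⟩, ?_, ?_⟩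
  · rintro ⟨i, hi⟩
    exact hw (hi ▸ (g i).2)
  · ext v
    simp only [Fin.Iio_last_eq_map, mem_map, mem_univ, Fin.coe_castSuccEmb, true_and,
      Function.Embedding.coeFn_mk, exists_exists_eq_and, Fin.snoc_castSucc]
    exact ⟨fun ⟨i, hi⟩ => hi ▸ (g i).2, fun hv => ⟨g.symm ⟨v, hv⟩, by simp⟩⟩
  · simp

namespace SComplex

variable {V W : Type} {C : SComplex V}

theorem exists_minNonface_subset {s : Finset V} (hs : s ∉ C.faces) :
    ∃ T ⊆ s, C.MinNonface T := by
  obtain ⟨T, hTs, hT⟩ := exists_minimal_le_of_wellFoundedLT (· ∉ C.faces) s hs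
  exact ⟨T, hTs, hT.1, fun t htT => not_not.1 fun ht => hT.not_prop_of_lt htT ht⟩

variable [DecidableEq V]

theorem isMinor_of_embedding [Fintype V] [Fintype W] [DecidableEq W] {D : SComplex W}
    (f : W ↪ V) (hC : ∅ ∈ C.faces) (hf : ∀ s, s ∈ D.faces ↔ s.map f ∈ C.faces) :
    D.IsMinor C := by
  set U : Finset V := ((∅ : Finset V) ∪ (univ.map f)ᶜ)ᶜ
  have hU : ∀ v, v ∈ U ↔ ∃ a, f a = v := by simp [U]
  let e : W ≃ {v // v ∈ U} := Equiv.ofBijective (fun a => ⟨f a, (hU _).2 ⟨a, rfl⟩⟩)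
    ⟨fun a b h => f.injective (congrArg Subtype.val h),
      fun v => (((hU v).1 v.2).imp fun _ => Subtype.ext)⟩
  refine ⟨∅, (univ.map f)ᶜ, disjoint_empty_left _, hC, e, fun s => ?_⟩
  have himage : (s.image e).map (Function.Embedding.subtype _) = s.map f := by
    rw [map_eq_image, image_image, map_eq_image]; rfl
  simp only [minorAt, mem_filter, mem_univ, true_and, union_empty]
  exact (hf s).trans (by rw [himage])

theorem MinNonface.mem_faces_iff {T : Finset V} (hT : C.MinNonface T) {w : V}
    (hw : {w} ∈ C.faces) (hsep : ∀ u ∈ T, {u, w} ∉ C.faces) {U : Finset V}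
    (hU : U ⊆ insert w T) : U ∈ C.faces ↔ U ⊂ T ∨ U = {w} := by
  refine ⟨fun hUf => ?_, fun h => h.elim (hT.2 U) (· ▸ hw)⟩
  by_cases hwU : w ∈ U
  · refine Or.inr (eq_singleton_iff_unique_mem.2 ⟨hwU, fun u hu => ?_⟩)
    by_contra huw
    have huT : u ∈ T := (mem_insert.1 (hU hu)).resolve_left huw
    exact hsep u huT (C.down_closed _ hUf _ (insert_subset hu (singleton_subset_iff.2 hwU)))
  · refine Or.inl (ssubset_of_subset_of_ne ((subset_insert_iff_of_notMem hwU).1 hU) ?_)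
    rintro rfl
    exact hT.1 hUf

theorem isMinor_bdyDisjPt_of_minNonface [Fintype V] {T : Finset V} (hT : C.MinNonface T)
    {k : ℕ} (hk : T.card = k + 1) {w : V} (hw : {w} ∈ C.faces)
    (hsep : ∀ u ∈ T, {u, w} ∉ C.faces) : (bdyDisjPt k).IsMinor C := by
  have hwT : w ∉ T := fun h => hsep w h (by simpa using hw)
  obtain ⟨f, hfT, hfw⟩ := exists_embedding_fin_succ_of_card_eq hk hwT
  refine isMinor_of_embedding f (C.down_closed _ hw _ (empty_subset _)) fun s => ?_
  have hsub : s.map f ⊆ insert w T := by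
    intro v hv
    obtain ⟨i, -, rfl⟩ := mem_map.1 hv
    induction i using Fin.lastCases with
    | last => exact hfw ▸ mem_insert_self _ _
    | cast i => exact mem_insert_of_mem (hfT ▸ mem_map_of_mem f (by simp))
  have hB : (univ.filter fun x : Fin (k + 2) => (x : ℕ) < k + 1) = Iio (Fin.last (k + 1)) := by
    ext x; simp only [mem_filter, mem_univ, true_and, mem_Iio, Fin.lt_def, Fin.val_last]
  rw [hT.mem_faces_iff hw hsep hsub, ← hfT, ← hfw, ← map_singleton, map_ssubset_map, map_inj]
  simp only [bdyDisjPt, mem_filter, mem_univ, true_and, hB]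

theorem subset_mem_faces_of_isolated [Fintype V]
    (hbd : ∀ k, 1 ≤ k → ¬ (bdyDisjPt k).IsMinor C) {M : Finset V}
    (hM : ∀ u ∈ M, ∀ v ∈ M, {u, v} ∈ C.faces) {w : V} (hw : {w} ∈ C.faces)
    (hsep : ∀ u ∈ M, {u, w} ∉ C.faces) {s : Finset V} (hs : s ⊆ M) : s ∈ C.faces := by
  by_contra hsf
  obtain ⟨T, hTs, hT⟩ := exists_minNonface_subset hsf
  have hTM := hTs.trans hs
  have hT3 : 2 < T.card := by
    by_contra! hT2
    refine hT.1 ?_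
    interval_cases h : T.card
    · exact C.down_closed _ hw _ (by simp [card_eq_zero.1 h])
    · obtain ⟨u, rfl⟩ := card_eq_one.1 h
      simpa using hM u (hTM (mem_singleton_self u)) u (hTM (mem_singleton_self u))
    · obtain ⟨u, v, -, rfl⟩ := card_eq_two.1 h
      exact hM u (hTM (by simp)) v (hTM (by simp))
  obtain ⟨k, hk⟩ : ∃ k, T.card = k + 1 := ⟨T.card - 1, by omega⟩
  exact hbd k (by omega) (isMinor_bdyDisjPt_of_minNonface hT hk hw fun u hu => hsep u (hTM hu))

theorem subset_or_subset_of_mem_faces [Fintype V] {M N : Finset V} (hcover : M ∪ N = univ)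
    (hedge : ∀ u v, u ≠ v → {u, v} ∈ C.faces → {u, v} ⊆ M ∨ {u, v} ⊆ N)
    {s : Finset V} (hs : s ∈ C.faces) : s ⊆ M ∨ s ⊆ N := by
  by_contra! h
  obtain ⟨u, hus, huM⟩ := not_subset.1 h.1
  obtain ⟨v, hvs, hvN⟩ := not_subset.1 h.2
  have huN : u ∈ N := (mem_union.1 (hcover ▸ mem_univ u)).resolve_left huM
  have huv : u ≠ v := by
    rintro rfl
    exact hvN huN
  rcases hedge u v huv (C.down_closed _ hs _ (insert_subset hus (singleton_subset_iff.2 hvs)))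
    with huvM | huvN
  · exact huM (huvM (mem_insert_self _ _))
  · exact hvN (huvN (by simp))

theorem subset_mem_faces_of_skeleton [Fintype V]
    (hbd : ∀ k, 1 ≤ k → ¬ (bdyDisjPt k).IsMinor C) (hng : ∀ v : V, {v} ∈ C.faces)
    {M N : Finset V} (hN : N.Nonempty) (hMN : Disjoint M N)
    (hskel : ∀ u v, u ≠ v → ({u, v} ∈ C.faces ↔ {u, v} ⊆ M ∨ {u, v} ⊆ N))
    {s : Finset V} (hs : s ⊆ M) : s ∈ C.faces := by
  obtain ⟨w, hwN⟩ := hN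
  refine subset_mem_faces_of_isolated hbd (fun u hu v hv => ?_) (hng w) (fun u hu hface => ?_) hs
  · rcases eq_or_ne u v with rfl | huv
    · simpa using hng u
    · exact (hskel u v huv).2 (Or.inl (insert_subset hu (singleton_subset_iff.2 hv)))
  · have huw : u ≠ w := by
      rintro rfl
      exact disjoint_left.1 hMN hu hwN
    rcases (hskel u w huw).1 hface with h | h
    · exact disjoint_left.1 hMN (h (by simp)) hwN
    · exact disjoint_left.1 hMN hu (h (by simp))

end SComplex

open SComplex in
/-- A β-avoiding complex without ghost vertices whose 1-skeleton is a disjoint union of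
two complete graphs on nonempty vertex sets `M` and `N` is the disjoint union of the full
simplices on `M` and on `N`. -/
theorem betaAvoiding_disconnected_skeleton {V : Type} [DecidableEq V] [Fintype V]
    (C : SComplex V) (hC : BetaAvoiding C)
    (hng : ∀ v : V, ({v} : Finset V) ∈ C.faces)
    (M N : Finset V) (hM : M.Nonempty) (hN : N.Nonempty) (hMN : Disjoint M N)
    (hcover : M ∪ N = Finset.univ)
    (hskel : ∀ u v : V, u ≠ v →
      (({u, v} : Finset V) ∈ C.faces ↔
        (({u, v} : Finset V) ⊆ M ∨ ({u, v} : Finset V) ⊆ N))) :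
    ∀ s : Finset V, s ∈ C.faces ↔ (s ⊆ M ∨ s ⊆ N) := by
  have hbd := hC.2.2.2.2.2.2
  refine fun s => ⟨subset_or_subset_of_mem_faces hcover fun u v huv => (hskel u v huv).1, ?_⟩
  rintro (hs | hs)
  · exact subset_mem_faces_of_skeleton hbd hng hN hMN hskel hs
  · exact subset_mem_faces_of_skeleton hbd hng hM hMN.symm
      (fun u v huv => (hskel u v huv).trans or_comm) hs
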